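/- For real c < -2, the inequality (ζ_c/(2(-ζ_c - c))) / (1 - ζ_c/(2(ζ_c - c))) < 1 holds if and only if c < -2 - √5, where ζ_c = (√(1-4c)+1)/2. -/

import Mathlib

/-!
Write `ζ` for the fixed point, so that `c = ζ - ζ²`. Then `-ζ - c = ζ (ζ - 2)` and `ζ - c = ζ²`, and the
quotient collapses to `ζ / ((ζ - 2) (2ζ - 1))`. For `ζ > 2` it is below `1` exactly when
`ζ² - 3ζ + 1 > 0`, i.e. when `ζ > (3 + √5)/2 = φ²`; since `c = ζ - ζ²` decreases in `ζ`, this threshold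
corresponds to `c = -φ³ = -2 - √5`.
-/

open Real

lemma sq_add_eq_self_of_eq_sqrt {c ζ : ℝ} (hc : c ≤ 1 / 4) (hζ : ζ = (√(1 - 4 * c) + 1) / 2) :
    ζ ^ 2 + c = ζ := by
  have hsq : √(1 - 4 * c) ^ 2 = 1 - 4 * c := sq_sqrt (by linarith)
  subst hζ
  linear_combination hsq / 4

lemma two_lt_of_eq_sqrt {c ζ : ℝ} (hc : c < -2) (hζ : ζ = (√(1 - 4 * c) + 1) / 2) : 2 < ζ := by
  have : 3 < √(1 - 4 * c) := lt_sqrt_of_sq_lt (by linarith)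
  linarith

lemma div_div_one_sub_div_eq {c ζ : ℝ} (hfix : ζ ^ 2 + c = ζ) (hζ : 2 < ζ) :
    ζ / (2 * (-ζ - c)) / (1 - ζ / (2 * (ζ - c))) = ζ / ((ζ - 2) * (2 * ζ - 1)) := by
  obtain rfl : c = ζ - ζ ^ 2 := by linarith
  have h1 : ζ - 2 ≠ 0 := by linarith
  have h2 : 2 * ζ - 1 ≠ 0 := by linarith
  have h3 : ζ ≠ 0 := by linarith
  rw [show -ζ - (ζ - ζ ^ 2) = ζ * (ζ - 2) by ring, show ζ - (ζ - ζ ^ 2) = ζ ^ 2 by ring]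
  field_simp

lemma div_mul_lt_one_iff {ζ : ℝ} (hζ : 2 < ζ) :
    ζ / ((ζ - 2) * (2 * ζ - 1)) < 1 ↔ (3 + √5) / 2 < ζ := by
  have h5 : √5 ^ 2 = 5 := sq_sqrt (by norm_num)
  have hfactor : (ζ - 2) * (2 * ζ - 1) - ζ = 2 * (ζ - (3 - √5) / 2) * (ζ - (3 + √5) / 2) := by
    linear_combination h5 / 2
  have hpos : 0 < 2 * (ζ - (3 - √5) / 2) := by linarith [sqrt_nonneg 5]
  rw [div_lt_one (by nlinarith), ← sub_pos, hfactor, mul_pos_iff_of_pos_left hpos, sub_pos]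

lemma lt_sqrt_one_sub_four_mul_iff {c : ℝ} :
    (3 + √5) / 2 < (√(1 - 4 * c) + 1) / 2 ↔ c < -2 - √5 := by
  have h5 : √5 ^ 2 = 5 := sq_sqrt (by norm_num)
  calc (3 + √5) / 2 < (√(1 - 4 * c) + 1) / 2 ↔ 2 + √5 < √(1 - 4 * c) := by
        constructor <;> intro <;> linarith
    _ ↔ (2 + √5) ^ 2 < 1 - 4 * c := lt_sqrt (by positivity)
    _ ↔ c < -2 - √5 := by constructor <;> intro <;> nlinarith

/-- For real `c < -2`, the inequality
`(ζ_c/(2(-ζ_c - c))) / (1 - ζ_c/(2(ζ_c - c))) < 1` holds iff `c < -2 - √5`. -/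
theorem stmt_7 (c : ℝ) (hc : c < -2) :
    (((Real.sqrt (1 - 4 * c) + 1) / 2) / (2 * (-((Real.sqrt (1 - 4 * c) + 1) / 2) - c))) /
        (1 - ((Real.sqrt (1 - 4 * c) + 1) / 2) / (2 * (((Real.sqrt (1 - 4 * c) + 1) / 2) - c))) < 1
      ↔ c < -2 - Real.sqrt 5 := by
  have hζ : 2 < (√(1 - 4 * c) + 1) / 2 := two_lt_of_eq_sqrt hc rfl
  rw [div_div_one_sub_div_eq (sq_add_eq_self_of_eq_sqrt (by linarith) rfl) hζ,
    div_mul_lt_one_iff hζ, lt_sqrt_one_sub_four_mul_iff]
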